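/- Let d_A, d_B, d_E be positive natural numbers and V an isometry from ℂ^{d_A} to ℂ^{d_B} ⊗ ℂ^{d_E}, with associated channel Φ(ρ) = Tr_E(V ρ Vᴴ) and complementary channel Φ̂(ρ) = Tr_B(V ρ Vᴴ). Then for every finite ensemble {π_i, P_i}_{i∈Fin m} in which every P_i is a pure state (a rank-one projection), with average state ρ = ∑_i π_i P_i, the coherent information satisfies H(Φ(ρ)) − H(Φ̂(ρ)) = χ({π_i, Φ(P_i)}) − χ({π_i, Φ̂(P_i)}). -/

import Mathlib

/-
For a pure input `P = u uᴴ` the output `V P Vᴴ = w wᴴ` (with `w = V u`) is pure on `BE`.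
Reading `w` as a `d_B × d_E` matrix `M`, the two marginals are `M Mᴴ` and `(Mᴴ M)ᵀ`, which
share their nonzero spectrum (Schmidt decomposition), so `H(Φ(P_i)) = H(Φ̂(P_i))`. Both
channels are linear, so the average outputs are the outputs of the average, and the two
χ-quantities differ exactly by `H(Φ(ρ)) − H(Φ̂(ρ))`.
-/

open Matrix ComplexOrder

noncomputable section

/-- Von Neumann entropy: sum of `negMulLog` over eigenvalues. -/
def vnEntropy {ι : Type*} [Fintype ι] [DecidableEq ι] (ρ : Matrix ι ι ℂ) : ℝ :=
  if h : ρ.IsHermitian then ∑ i, Real.negMulLog (h.eigenvalues i) else 0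

/-- Partial trace over the second (environment) factor. -/
def ptraceE {dB dE : ℕ} (M : Matrix (Fin dB × Fin dE) (Fin dB × Fin dE) ℂ) :
    Matrix (Fin dB) (Fin dB) ℂ :=
  Matrix.of fun b b' => ∑ e, M (b, e) (b', e)

/-- Partial trace over the first factor. -/
def ptraceB {dB dE : ℕ} (M : Matrix (Fin dB × Fin dE) (Fin dB × Fin dE) ℂ) :
    Matrix (Fin dE) (Fin dE) ℂ :=
  Matrix.of fun e e' => ∑ b, M (b, e) (b, e')

/-- Quantum mutual information I(B:E) of a bipartite state. -/
def qmi {dB dE : ℕ} (ω : Matrix (Fin dB × Fin dE) (Fin dB × Fin dE) ℂ) : ℝ :=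
  vnEntropy (ptraceE ω) + vnEntropy (ptraceB ω) - vnEntropy ω

/-- The channel `ρ ↦ Tr_E (V ρ Vᴴ)` associated with a Stinespring isometry `V`. -/
def chanPhi {dA dB dE : ℕ} (V : Matrix (Fin dB × Fin dE) (Fin dA) ℂ)
    (ρ : Matrix (Fin dA) (Fin dA) ℂ) : Matrix (Fin dB) (Fin dB) ℂ :=
  ptraceE (V * ρ * Vᴴ)

/-- The complementary channel `ρ ↦ Tr_B (V ρ Vᴴ)`. -/
def chanPhiHat {dA dB dE : ℕ} (V : Matrix (Fin dB × Fin dE) (Fin dA) ℂ)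
    (ρ : Matrix (Fin dA) (Fin dA) ℂ) : Matrix (Fin dE) (Fin dE) ℂ :=
  ptraceB (V * ρ * Vᴴ)

/-- Holevo χ-quantity of a finite ensemble `{π i, σ i}`. -/
def finChi {d m : ℕ} (π : Fin m → ℝ) (σ : Fin m → Matrix (Fin d) (Fin d) ℂ) : ℝ :=
  vnEntropy (∑ i, π i • σ i) - ∑ i, π i * vnEntropy (σ i)

end

open Polynomial

section Entropy

variable {ι κ : Type*} [Fintype ι] [DecidableEq ι] [Fintype κ] [DecidableEq κ]

lemma vnEntropy_eq_sum_roots_charpoly {A : Matrix ι ι ℂ} (hA : A.IsHermitian) :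
    vnEntropy A = (A.charpoly.roots.map fun z => Real.negMulLog z.re).sum := by
  rw [vnEntropy, dif_pos hA, hA.roots_charpoly_eq_eigenvalues]
  simp [Multiset.map_map]

-- Padding by `X ^ k` only adds zero eigenvalues, which carry no entropy as `negMulLog 0 = 0`.
lemma vnEntropy_eq_of_X_pow_mul_charpoly_eq {A : Matrix ι ι ℂ} {B : Matrix κ κ ℂ}
    (hA : A.IsHermitian) (hB : B.IsHermitian)
    (h : X ^ Fintype.card κ * A.charpoly = X ^ Fintype.card ι * B.charpoly) :
    vnEntropy A = vnEntropy B := by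
  have hroots := congrArg roots h
  rw [roots_mul ((monic_X_pow _).mul A.charpoly_monic).ne_zero,
    roots_mul ((monic_X_pow _).mul B.charpoly_monic).ne_zero, roots_X_pow, roots_X_pow] at hroots
  have hsum := congrArg (fun s : Multiset ℂ => (s.map fun z => Real.negMulLog z.re).sum) hroots
  simpa [Multiset.map_nsmul, Multiset.sum_nsmul, vnEntropy_eq_sum_roots_charpoly, hA, hB]
    using hsum

lemma vnEntropy_mul_conjTranspose_comm (A : Matrix ι κ ℂ) :
    vnEntropy (A * Aᴴ) = vnEntropy (Aᴴ * A) :=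
  vnEntropy_eq_of_X_pow_mul_charpoly_eq (isHermitian_mul_conjTranspose_self A)
    (isHermitian_conjTranspose_mul_self A) (charpoly_mul_comm' A Aᴴ)

lemma vnEntropy_transpose {A : Matrix ι ι ℂ} (hA : A.IsHermitian) :
    vnEntropy Aᵀ = vnEntropy A :=
  vnEntropy_eq_of_X_pow_mul_charpoly_eq hA.transpose hA (by rw [charpoly_transpose])

end Entropy

section PureStates

variable {ι : Type*} [Fintype ι] [DecidableEq ι]

lemma Matrix.mul_vecMulVec_mul {l m n o α : Type*} [CommSemiring α] [Fintype m] [Fintype n]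
    (M : Matrix l m α) (u : m → α) (v : n → α) (N : Matrix n o α) :
    M * vecMulVec u v * N = vecMulVec (M *ᵥ u) (v ᵥ* N) := by
  ext i k
  simp only [mul_apply, vecMulVec_apply, mulVec, vecMul, dotProduct, Finset.sum_mul,
    Finset.mul_sum]
  exact Finset.sum_congr rfl fun _ _ => Finset.sum_congr rfl fun _ _ => by ring

lemma Matrix.mul_vecMulVec_star_mul_conjTranspose {m n : Type*} [Fintype n]
    (M : Matrix m n ℂ) (u : n → ℂ) :
    M * vecMulVec u (star u) * Mᴴ = vecMulVec (M *ᵥ u) (star (M *ᵥ u)) := by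
  rw [mul_vecMulVec_mul, star_mulVec]

lemma Matrix.diagonal_ofReal_pi_single {κ : Type*} [DecidableEq κ] (j : κ) :
    diagonal (Complex.ofReal ∘ Pi.single j 1) =
      vecMulVec (Pi.single j 1) (star (Pi.single j 1)) := by
  ext i k
  simp only [diagonal_apply, vecMulVec_apply, Function.comp_apply, Pi.star_apply, Pi.single_apply]
  split_ifs <;> simp_all

lemma exists_eq_pi_single_of_sum_eq_one {f : ι → ℝ} (h01 : ∀ i, f i = 0 ∨ f i = 1)
    (hsum : ∑ i, f i = 1) : ∃ j, f = Pi.single j 1 := by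
  obtain ⟨j, -, hj⟩ : ∃ j ∈ Finset.univ, f j ≠ 0 :=
    Finset.exists_ne_zero_of_sum_ne_zero (by rw [hsum]; exact one_ne_zero)
  have hfj : f j = 1 := (h01 j).resolve_left hj
  have hrest : ∑ i ∈ Finset.univ.erase j, f i = 0 := by
    rw [← Finset.add_sum_erase _ _ (Finset.mem_univ j), hfj] at hsum
    linarith
  have hzero := (Finset.sum_eq_zero_iff_of_nonneg fun i _ =>
    (h01 i).elim (fun h => h.ge) (fun h => h ▸ zero_le_one)).mp hrest
  refine ⟨j, funext fun i => ?_⟩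
  rcases eq_or_ne i j with rfl | hij
  · simp [hfj]
  · simp [hij, hzero i (Finset.mem_erase.mpr ⟨hij, Finset.mem_univ i⟩)]

lemma Matrix.IsHermitian.exists_eq_vecMulVec_of_isIdempotentElem {A : Matrix ι ι ℂ}
    (hA : A.IsHermitian) (hid : IsIdempotentElem A) (htr : A.trace = 1) :
    ∃ u : ι → ℂ, A = vecMulVec u (star u) := by
  have h01 : ∀ i, hA.eigenvalues i = 0 ∨ hA.eigenvalues i = 1 := fun i =>
    hid.spectrum_subset ℝ (hA.eigenvalues_mem_spectrum_real i)
  have hsum : ∑ i, hA.eigenvalues i = 1 := by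
    have h := hA.trace_eq_sum_eigenvalues.symm.trans htr
    simp only [RCLike.ofReal_eq_complex_ofReal] at h
    exact_mod_cast h
  obtain ⟨j, hj⟩ := exists_eq_pi_single_of_sum_eq_one h01 hsum
  set U : Matrix ι ι ℂ := (hA.eigenvectorUnitary : Matrix ι ι ℂ)
  refine ⟨U *ᵥ Pi.single j 1, ?_⟩
  rw [hA.spectral_theorem, Unitary.conjStarAlgAut_apply, hj, RCLike.ofReal_eq_complex_ofReal,
    diagonal_ofReal_pi_single, star_eq_conjTranspose, mul_vecMulVec_star_mul_conjTranspose]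

end PureStates

section Channels

variable {dA dB dE : ℕ}

lemma ptraceE_vecMulVec_star (w : Fin dB × Fin dE → ℂ) :
    ptraceE (vecMulVec w (star w)) = of (Function.curry w) * (of (Function.curry w))ᴴ := by
  ext b b'
  simp [ptraceE, mul_apply, vecMulVec_apply]

lemma ptraceB_vecMulVec_star (w : Fin dB × Fin dE → ℂ) :
    ptraceB (vecMulVec w (star w)) = ((of (Function.curry w))ᴴ * of (Function.curry w))ᵀ := by
  ext e e'
  simp [ptraceB, mul_apply, vecMulVec_apply, mul_comm]

lemma vnEntropy_ptraceE_vecMulVec_star (w : Fin dB × Fin dE → ℂ) :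
    vnEntropy (ptraceE (vecMulVec w (star w))) = vnEntropy (ptraceB (vecMulVec w (star w))) := by
  rw [ptraceE_vecMulVec_star, ptraceB_vecMulVec_star,
    vnEntropy_transpose (isHermitian_conjTranspose_mul_self _)]
  exact vnEntropy_mul_conjTranspose_comm _

lemma vnEntropy_chanPhi_eq_vnEntropy_chanPhiHat (V : Matrix (Fin dB × Fin dE) (Fin dA) ℂ)
    {P : Matrix (Fin dA) (Fin dA) ℂ} (hP : P.IsHermitian) (hid : IsIdempotentElem P)
    (htr : P.trace = 1) :
    vnEntropy (chanPhi V P) = vnEntropy (chanPhiHat V P) := by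
  obtain ⟨u, rfl⟩ := hP.exists_eq_vecMulVec_of_isIdempotentElem hid htr
  rw [chanPhi, chanPhiHat, mul_vecMulVec_star_mul_conjTranspose]
  exact vnEntropy_ptraceE_vecMulVec_star _

lemma chanPhi_sum_smul {ι : Type*} [Fintype ι] (V : Matrix (Fin dB × Fin dE) (Fin dA) ℂ)
    (c : ι → ℝ) (ρ : ι → Matrix (Fin dA) (Fin dA) ℂ) :
    chanPhi V (∑ i, c i • ρ i) = ∑ i, c i • chanPhi V (ρ i) := by
  ext b b'
  simp only [chanPhi, ptraceE, Matrix.mul_sum, Matrix.sum_mul, Matrix.mul_smul, Matrix.smul_mul,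
    of_apply, Matrix.sum_apply, Matrix.smul_apply, Finset.smul_sum]
  exact Finset.sum_comm

lemma chanPhiHat_sum_smul {ι : Type*} [Fintype ι] (V : Matrix (Fin dB × Fin dE) (Fin dA) ℂ)
    (c : ι → ℝ) (ρ : ι → Matrix (Fin dA) (Fin dA) ℂ) :
    chanPhiHat V (∑ i, c i • ρ i) = ∑ i, c i • chanPhiHat V (ρ i) := by
  ext e e'
  simp only [chanPhiHat, ptraceB, Matrix.mul_sum, Matrix.sum_mul, Matrix.mul_smul,
    Matrix.smul_mul, of_apply, Matrix.sum_apply, Matrix.smul_apply, Finset.smul_sum]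
  exact Finset.sum_comm

end Channels

theorem coherent_info_eq_chi_diff_of_pure_ensemble_general
    (dA dB dE : ℕ)
    (V : Matrix (Fin dB × Fin dE) (Fin dA) ℂ)
    (m : ℕ) (π : Fin m → ℝ)
    (P : Fin m → Matrix (Fin dA) (Fin dA) ℂ)
    (hP : ∀ i, (P i).PosSemidef ∧ (P i).trace = 1)
    (hPure : ∀ i, P i * P i = P i) :
    vnEntropy (chanPhi V (∑ i, π i • P i)) - vnEntropy (chanPhiHat V (∑ i, π i • P i))
      = finChi π (fun i => chanPhi V (P i)) - finChi π (fun i => chanPhiHat V (P i)) := by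
  have hpure (i : Fin m) : vnEntropy (chanPhi V (P i)) = vnEntropy (chanPhiHat V (P i)) :=
    vnEntropy_chanPhi_eq_vnEntropy_chanPhiHat V (hP i).1.isHermitian (hPure i) (hP i).2
  rw [finChi, finChi, chanPhi_sum_smul, chanPhiHat_sum_smul]
  simp only [hpure]
  ring

/-- For an ensemble of pure states with average state `ρ`, the coherent information
`H(Φ(ρ)) − H(Φ̂(ρ))` equals the difference of the output χ-quantities
`χ(Φ(μ)) − χ(Φ̂(μ))`. -/
theorem coherent_info_eq_chi_diff_of_pure_ensemble
    (dA dB dE : ℕ) (hdA : 0 < dA) (hdB : 0 < dB) (hdE : 0 < dE)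
    (V : Matrix (Fin dB × Fin dE) (Fin dA) ℂ) (hV : Vᴴ * V = 1)
    (m : ℕ) (π : Fin m → ℝ) (hπ0 : ∀ i, 0 ≤ π i) (hπ1 : ∑ i, π i = 1)
    (P : Fin m → Matrix (Fin dA) (Fin dA) ℂ)
    (hP : ∀ i, (P i).PosSemidef ∧ (P i).trace = 1)
    (hPure : ∀ i, P i * P i = P i) :
    vnEntropy (chanPhi V (∑ i, π i • P i)) - vnEntropy (chanPhiHat V (∑ i, π i • P i))
      = finChi π (fun i => chanPhi V (P i)) - finChi π (fun i => chanPhiHat V (P i)) :=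
  coherent_info_eq_chi_diff_of_pure_ensemble_general dA dB dE V m π P hP hPure
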